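/- arXiv:2308.03513 — 8 statements merged into one kernel-verified Lean document; each statement's English description precedes it below -/
import Mathlib

section
/- Let p be a prime, m a positive integer, and ℓ an integer with p ∤ ℓ. Set α = 1 + p^m·ℓ and suppose ℓ' ≡ ℓ (mod p^m), i.e. α' = 1 + p^m·ℓ' satisfies α' ≡ α (mod p^{2m}). Then there exists a positive integer f with f ≡ 1 (mod p^m) such that α' ≡ α^f (mod p^{3m}), provided p is odd. -/
/-!
Write `q = p^m` and `α = 1 + qℓ`. Modulo `x³` one has `(1 + x)^n ≡ 1 + n x + C(n,2) x²`, and when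
`n ≡ 1 (mod q)` with `q` odd, `q ∣ n(n-1)/2`, so with `x = qℓ` the quadratic term vanishes modulo
`q³`: `α^f ≡ 1 + f qℓ (mod q³)`. For `f = 1 + kq` this is `1 + qℓ + q²kℓ`, while
`α' = 1 + qℓ + q²t` where `ℓ' - ℓ = qt`; since `ℓ` is invertible modulo `q`, choose `k` with
`kℓ ≡ t (mod q)`.
-/

theorem Int.one_add_pow_modEq (x : ℤ) (n : ℕ) :
    (1 + x) ^ n ≡ 1 + n * x + n.choose 2 * x ^ 2 [ZMOD x ^ 3] := by
  induction n with
  | zero => simp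
  | succ n ih =>
    rw [pow_succ (1 + x)]
    refine (ih.mul_right (1 + x)).trans (Int.modEq_iff_dvd.mpr ⟨-n.choose 2, ?_⟩)
    rw [Nat.choose_succ_succ, Nat.choose_one_right]
    push_cast
    ring

theorem Nat.dvd_choose_two_of_odd {q n : ℕ} (hq : Odd q) (hn : q ∣ n - 1) :
    q ∣ n.choose 2 := by
  have htwo : n.choose 2 * 2 = n * (n - 1) := by
    rw [Nat.choose_two_right, Nat.div_mul_cancel (Nat.even_mul_pred_self n).two_dvd]
  exact (Nat.coprime_two_right.mpr hq).dvd_of_dvd_mul_right (htwo ▸ hn.mul_left n)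

theorem Int.one_add_mul_pow_modEq {q n : ℕ} (hq : Odd q) (hn : q ∣ n - 1) (ℓ : ℤ) :
    (1 + q * ℓ) ^ n ≡ 1 + n * (q * ℓ) [ZMOD q ^ 3] := by
  obtain ⟨c, hc⟩ := Nat.dvd_choose_two_of_odd hq hn
  have hcube : (q : ℤ) ^ 3 ∣ (q * ℓ) ^ 3 := ⟨ℓ ^ 3, by ring⟩
  refine ((Int.one_add_pow_modEq _ n).of_dvd hcube).trans ?_
  conv_rhs => rw [← add_zero (1 + n * (q * ℓ) : ℤ)]
  refine Int.ModEq.add_left _ (Int.modEq_zero_iff_dvd.mpr ⟨c * ℓ ^ 2, ?_⟩)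
  rw [hc]
  push_cast
  ring

theorem Int.exists_nat_mul_modEq {a q : ℤ} (hq : q ≠ 0) (h : IsCoprime a q) (b : ℤ) :
    ∃ k : ℕ, k * a ≡ b [ZMOD q] := by
  obtain ⟨u, v, huv⟩ := h
  refine ⟨(b * u % q).toNat, ?_⟩
  rw [Int.toNat_of_nonneg (Int.emod_nonneg _ hq)]
  calc b * u % q * a ≡ b * u * a [ZMOD q] := (Int.mod_modEq _ _).mul_right a
    _ = b - b * v * q := by linear_combination b * huv
    _ ≡ b [ZMOD q] := Int.modEq_iff_dvd.mpr ⟨b * v, by ring⟩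

theorem stmt_1_general (p m : ℕ) (hp : p.Prime) (hodd : Odd p)
    (ℓ ℓ' : ℤ) (hℓ : ¬ (p : ℤ) ∣ ℓ)
    (hcong : ℓ' ≡ ℓ [ZMOD (p : ℤ) ^ m]) :
    ∃ f : ℕ, 0 < f ∧ f ≡ 1 [MOD p ^ m] ∧
      (1 + (p : ℤ) ^ m * ℓ') ≡ (1 + (p : ℤ) ^ m * ℓ) ^ f [ZMOD (p : ℤ) ^ (3 * m)] := by
  have hq : ((p ^ m : ℕ) : ℤ) = (p : ℤ) ^ m := Nat.cast_pow p m
  have hcop : IsCoprime ℓ ((p : ℤ) ^ m) :=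
    (((Nat.prime_iff_prime_int.mp hp).coprime_iff_not_dvd).mpr hℓ).symm.pow_right
  obtain ⟨t, ht⟩ := hcong.symm.dvd
  obtain ⟨k, hk⟩ := Int.exists_nat_mul_modEq (pow_ne_zero m (by exact_mod_cast hp.ne_zero)) hcop t
  refine ⟨1 + k * p ^ m, by omega, by simp [Nat.ModEq, Nat.add_mul_mod_self_right], ?_⟩
  have hpow := Int.one_add_mul_pow_modEq (q := p ^ m) (n := 1 + k * p ^ m) hodd.pow (by simp) ℓ
  rw [hq, ← pow_mul, mul_comm] at hpow
  refine Int.ModEq.symm (hpow.trans ?_)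
  have hcube : (p : ℤ) ^ (3 * m) = ((p : ℤ) ^ m) ^ 2 * (p : ℤ) ^ m := by ring
  calc 1 + ((1 + k * p ^ m : ℕ) : ℤ) * ((p : ℤ) ^ m * ℓ)
      = 1 + (p : ℤ) ^ m * ℓ + ((p : ℤ) ^ m) ^ 2 * (k * ℓ) := by push_cast; ring
    _ ≡ 1 + (p : ℤ) ^ m * ℓ + ((p : ℤ) ^ m) ^ 2 * t [ZMOD (p : ℤ) ^ (3 * m)] :=
        hcube ▸ (hk.mul_left' (c := ((p : ℤ) ^ m) ^ 2)).add_left _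
    _ = 1 + (p : ℤ) ^ m * ℓ' := by linear_combination -(p : ℤ) ^ m * ht

/-- Let `p` be an odd prime, `m ≥ 1`, `ℓ, ℓ'` integers coprime to `p` with
`ℓ' ≡ ℓ (mod p^m)`. Then there is a positive integer `f ≡ 1 (mod p^m)` with
`1 + p^m·ℓ' ≡ (1 + p^m·ℓ)^f (mod p^(3m))`. -/
theorem stmt_1 (p m : ℕ) (hp : p.Prime) (hodd : Odd p) (hm : 1 ≤ m)
    (ℓ ℓ' : ℤ) (hℓ : ¬ (p : ℤ) ∣ ℓ) (hℓ' : ¬ (p : ℤ) ∣ ℓ')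
    (hcong : ℓ' ≡ ℓ [ZMOD (p : ℤ) ^ m]) :
    ∃ f : ℕ, 0 < f ∧ f ≡ 1 [MOD p ^ m] ∧
      (1 + (p : ℤ) ^ m * ℓ') ≡ (1 + (p : ℤ) ^ m * ℓ) ^ f [ZMOD (p : ℤ) ^ (3 * m)] :=
  stmt_1_general p m hp hodd ℓ ℓ' hℓ hcong
end

section
/- Let m ≥ 1, ℓ an odd integer, α = 1 + 2^m·ℓ, and ℓ' ≡ ℓ (mod 2^m). Then there exists a positive integer f ≡ 1 (mod 2^m) such that 1 + 2^m·ℓ' ≡ α^f (mod 2^{3m−1}). -/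
private lemma pow_modeq_cube (c : ℤ) (n : ℕ) :
    (1 + c) ^ n ≡ 1 + (n : ℤ) * c + (n.choose 2 : ℤ) * c ^ 2 [ZMOD c ^ 3] := by
  induction n with
  | zero => simp
  | succ n ih =>
    have hch : (((n + 1).choose 2 : ℕ) : ℤ) = (n.choose 2 : ℤ) + n := by
      rw [Nat.choose_succ_succ]
      push_cast [Nat.choose_one_right]
      ring
    calc (1 + c) ^ (n + 1) = (1 + c) ^ n * (1 + c) := by ring
      _ ≡ (1 + (n : ℤ) * c + (n.choose 2 : ℤ) * c ^ 2) * (1 + c) [ZMOD c ^ 3] :=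
          ih.mul_right _
      _ = 1 + ((n : ℤ) + 1) * c + ((n.choose 2 : ℤ) + n) * c ^ 2
            + (n.choose 2 : ℤ) * c ^ 3 := by ring
      _ ≡ 1 + ((n + 1 : ℕ) : ℤ) * c + ((n + 1).choose 2 : ℤ) * c ^ 2 [ZMOD c ^ 3] := by
          rw [hch]
          push_cast
          exact Int.ModEq.symm (Int.modEq_iff_dvd.mpr ⟨(n.choose 2 : ℤ), by ring⟩)

private lemma drop_term (N A B : ℤ) (h : (2 : ℤ) ^ (3 * m - 1) ∣ B) : A + B ≡ A [ZMOD (2 : ℤ) ^ (3 * m - 1)] := by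
  obtain ⟨c, hc⟩ := h
  exact Int.modEq_iff_dvd.mpr ⟨-c, by rw [hc]; ring⟩

/-- Let `m ≥ 1`, `ℓ, ℓ'` odd integers with `ℓ' ≡ ℓ (mod 2^m)`, `α = 1 + 2^m·ℓ`.
Then there is a positive integer `f ≡ 1 (mod 2^m)` with
`1 + 2^m·ℓ' ≡ α^f (mod 2^(3m−1))`. -/
theorem stmt_3 (m : ℕ) (hm : 1 ≤ m) (ℓ ℓ' : ℤ) (hℓ : Odd ℓ) (hℓ' : Odd ℓ')
    (hcong : ℓ' ≡ ℓ [ZMOD (2 : ℤ) ^ m]) :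
    ∃ f : ℕ, 0 < f ∧ f ≡ 1 [MOD 2 ^ m] ∧
      (1 + (2 : ℤ) ^ m * ℓ') ≡ (1 + (2 : ℤ) ^ m * ℓ) ^ f [ZMOD (2 : ℤ) ^ (3 * m - 1)] := by
  set P : ℤ := (2 : ℤ) ^ (m - 1) with hP
  have hPpos : 0 < P := by positivity
  have h2m : (2 : ℤ) ^ m = 2 * P := by
    rw [hP, ← pow_succ']
    congr 1
    omega
  have h22m : (2 : ℤ) ^ (2 * m) = 4 * P ^ 2 := by
    rw [show 2 * m = (m - 1) + ((m - 1) + 2) by omega, pow_add, pow_add]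
    ring
  have h3m : (2 : ℤ) ^ (3 * m) = 8 * P ^ 3 := by
    rw [show 3 * m = (m - 1) + ((m - 1) + ((m - 1) + 3)) by omega, pow_add, pow_add, pow_add]
    ring
  have hN : (2 : ℤ) ^ (3 * m - 1) = 4 * P ^ 3 := by
    rw [show 3 * m - 1 = (m - 1) + ((m - 1) + ((m - 1) + 2)) by omega, pow_add, pow_add, pow_add]
    ring
  -- t with ℓ - ℓ' = 2^m t
  obtain ⟨t, ht⟩ := Int.ModEq.dvd hcong
  -- coprimality: get v with v*ℓ ≡ 1 mod P
  obtain ⟨s, hs⟩ := hℓ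
  have hcop : IsCoprime (2 : ℤ) ℓ := ⟨-s, 1, by rw [hs]; ring⟩
  obtain ⟨u, v, huv⟩ := (hcop.pow_left : IsCoprime ((2 : ℤ) ^ (m - 1)) ℓ)
  -- define k
  set k0 : ℤ := (-t * v) % P with hk0
  set k : ℕ := k0.toNat with hkdef
  have hk : (k : ℤ) = k0 := Int.toNat_of_nonneg (Int.emod_nonneg _ (ne_of_gt hPpos))
  have h1 : (k : ℤ) ≡ -t * v [ZMOD P] := by
    rw [hk, hk0]
    exact Int.emod_emod_of_dvd _ dvd_rfl
  have h2 : v * ℓ ≡ 1 [ZMOD P] := Int.modEq_iff_dvd.mpr ⟨u, by linarith⟩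
  have hkl : (k : ℤ) * ℓ ≡ -t [ZMOD P] := by
    calc (k : ℤ) * ℓ ≡ -t * v * ℓ [ZMOD P] := h1.mul_right ℓ
      _ = -t * (v * ℓ) := by ring
      _ ≡ -t * 1 [ZMOD P] := h2.mul_left _
      _ = -t := by ring
  obtain ⟨r, hr⟩ := Int.ModEq.dvd hkl
  -- choose divisibility
  have hchoose : (2 : ℕ) ^ (m - 1) ∣ ((2 : ℕ) ^ m).choose 2 := by
    rw [Nat.choose_two_right, show (2 : ℕ) ^ m = 2 * 2 ^ (m - 1) by
      rw [← pow_succ']; congr 1; omega, mul_assoc,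
      Nat.mul_div_cancel_left _ (by norm_num)]
    exact dvd_mul_right _ _
  obtain ⟨w, hw⟩ := hchoose
  have hwZ : (((2 : ℕ) ^ m).choose 2 : ℤ) = P * w := by
    rw [hP]; exact_mod_cast congrArg (Nat.cast : ℕ → ℤ) hw
  refine ⟨1 + 2 ^ m * k, by positivity, ?_, ?_⟩
  · show (1 + 2 ^ m * k) % 2 ^ m = 1 % 2 ^ m
    exact Nat.add_mul_mod_self_left 1 (2 ^ m) k
  -- main congruence
  -- step 1 : (1+2^m ℓ)^(2^m) ≡ 1 + 2^(2m) ℓ mod N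
  have hdvd3 : (2 : ℤ) ^ (3 * m - 1) ∣ ((2 : ℤ) ^ m * ℓ) ^ 3 := ⟨2 * ℓ ^ 3, by rw [hN, h2m]; ring⟩
  have hdvd2 : (2 : ℤ) ^ (3 * m - 1) ∣ (((2 : ℕ) ^ m).choose 2 : ℤ) * ((2 : ℤ) ^ m * ℓ) ^ 2 :=
    ⟨(w : ℤ) * ℓ ^ 2, by rw [hN, hwZ, h2m]; ring⟩
  have hstep1 : (1 + (2 : ℤ) ^ m * ℓ) ^ (2 ^ m) ≡ 1 + 2 ^ (2 * m) * ℓ [ZMOD (2 : ℤ) ^ (3 * m - 1)] := by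
    have hc := (pow_modeq_cube ((2 : ℤ) ^ m * ℓ) (2 ^ m)).of_dvd hdvd3
    have hcast : ((2 ^ m : ℕ) : ℤ) * ((2 : ℤ) ^ m * ℓ) = 2 ^ (2 * m) * ℓ := by
      push_cast [h22m, h2m]; ring
    calc (1 + (2 : ℤ) ^ m * ℓ) ^ (2 ^ m)
        ≡ 1 + ((2 ^ m : ℕ) : ℤ) * ((2 : ℤ) ^ m * ℓ)
            + (((2 : ℕ) ^ m).choose 2 : ℤ) * ((2 : ℤ) ^ m * ℓ) ^ 2 [ZMOD (2 : ℤ) ^ (3 * m - 1)] := hc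
      _ ≡ 1 + ((2 ^ m : ℕ) : ℤ) * ((2 : ℤ) ^ m * ℓ) [ZMOD (2 : ℤ) ^ (3 * m - 1)] := drop_term ((2 : ℤ) ^ (3 * m - 1)) _ _ hdvd2
      _ = 1 + 2 ^ (2 * m) * ℓ := by rw [hcast]
  -- step 3 : (1 + 2^(2m) ℓ)^k ≡ 1 + k·2^(2m) ℓ mod N
  have hdvd3' : (2 : ℤ) ^ (3 * m - 1) ∣ ((2 : ℤ) ^ (2 * m) * ℓ) ^ 3 := ⟨16 * P ^ 3 * ℓ ^ 3, by
    rw [hN, h22m]; ring⟩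
  have hdvd2' : (2 : ℤ) ^ (3 * m - 1) ∣ ((k).choose 2 : ℤ) * ((2 : ℤ) ^ (2 * m) * ℓ) ^ 2 :=
    ⟨(k.choose 2 : ℤ) * 4 * P * ℓ ^ 2, by rw [hN, h22m]; ring⟩
  have hstep3 : (1 + (2 : ℤ) ^ (2 * m) * ℓ) ^ k ≡ 1 + (k : ℤ) * (2 ^ (2 * m) * ℓ) [ZMOD (2 : ℤ) ^ (3 * m - 1)] := by
    have hc := (pow_modeq_cube ((2 : ℤ) ^ (2 * m) * ℓ) k).of_dvd hdvd3'
    exact hc.trans (drop_term ((2 : ℤ) ^ (3 * m - 1)) _ _ hdvd2')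
  -- step 5 : expand product
  have hstep5 : 1 + (2 : ℤ) ^ m * ℓ + (k : ℤ) * (2 ^ (2 * m) * ℓ)
      ≡ (1 + (2 : ℤ) ^ m * ℓ) * (1 + (k : ℤ) * (2 ^ (2 * m) * ℓ)) [ZMOD (2 : ℤ) ^ (3 * m - 1)] := by
    refine Int.modEq_iff_dvd.mpr ⟨2 * (k : ℤ) * ℓ ^ 2, ?_⟩
    rw [hN, h2m, h22m]; ring
  -- step 6 : adjust ℓ' to ℓ
  have hstep6 : 1 + (2 : ℤ) ^ m * ℓ' ≡ 1 + (2 : ℤ) ^ m * ℓ + (k : ℤ) * (2 ^ (2 * m) * ℓ) [ZMOD (2 : ℤ) ^ (3 * m - 1)] := by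
    refine Int.modEq_iff_dvd.mpr ⟨-r, ?_⟩
    -- ht : ℓ - ℓ' = 2^m * t ;  hr : -t - k*ℓ = P * r
    rw [hN]
    have h1' : ℓ' = ℓ - 2 * P * t := by rw [← h2m]; linarith
    have h2' : (k : ℤ) * ℓ = -t - P * r := by linarith
    rw [h1', h22m, h2m]
    linear_combination 4 * P ^ 2 * h2'
  calc 1 + (2 : ℤ) ^ m * ℓ'
      ≡ 1 + (2 : ℤ) ^ m * ℓ + (k : ℤ) * (2 ^ (2 * m) * ℓ) [ZMOD (2 : ℤ) ^ (3 * m - 1)] := hstep6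
    _ ≡ (1 + (2 : ℤ) ^ m * ℓ) * (1 + (k : ℤ) * (2 ^ (2 * m) * ℓ)) [ZMOD (2 : ℤ) ^ (3 * m - 1)] := hstep5
    _ ≡ (1 + (2 : ℤ) ^ m * ℓ) * ((1 + (2 : ℤ) ^ (2 * m) * ℓ) ^ k) [ZMOD (2 : ℤ) ^ (3 * m - 1)] :=
        (hstep3.symm).mul_left _
    _ ≡ (1 + (2 : ℤ) ^ m * ℓ) * (((1 + (2 : ℤ) ^ m * ℓ) ^ (2 ^ m)) ^ k) [ZMOD (2 : ℤ) ^ (3 * m - 1)] :=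
        ((hstep1.symm).pow k).mul_left _
    _ = (1 + (2 : ℤ) ^ m * ℓ) ^ (1 + 2 ^ m * k) := by
        rw [pow_add, pow_mul, pow_one]
end

section
/- Let m ≥ 1 and let α, f be positive integers with α ≡ 1 (mod 2^m) and f ≡ 1 (mod 2^m). Then α + 2α² + ⋯ + (f−1)α^{f−1} ≡ 0 (mod 2^{m−1}). -/
/-- Let `m ≥ 1` and `α, f` positive integers with `α ≡ 1 (mod 2^m)` and
`f ≡ 1 (mod 2^m)`. Then `α + 2α² + ⋯ + (f−1)α^(f−1) ≡ 0 (mod 2^(m−1))`. -/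
theorem stmt_4 (m : ℕ) (hm : 1 ≤ m) (α f : ℕ) (hα0 : 0 < α) (hf0 : 0 < f)
    (hα : α ≡ 1 [MOD 2 ^ m]) (hf : f ≡ 1 [MOD 2 ^ m]) :
    (∑ i ∈ Finset.range f, (i : ℤ) * (α : ℤ) ^ i) ≡ 0 [ZMOD (2 : ℤ) ^ (m - 1)] := by
  -- cast α congruence to ℤ and reduce modulus
  have hd : ((2:ℤ) ^ (m-1)) ∣ ((2:ℤ) ^ m) := pow_dvd_pow 2 (Nat.sub_le m 1)
  have hαZ : (α : ℤ) ≡ 1 [ZMOD (2:ℤ) ^ (m-1)] := by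
    have h1 : (α : ℤ) ≡ 1 [ZMOD ((2:ℕ) ^ m : ℕ)] := by
      exact_mod_cast Int.natCast_modEq_iff.mpr hα
    have h2 : (α : ℤ) ≡ 1 [ZMOD (2:ℤ) ^ m] := by exact_mod_cast h1
    exact h2.of_dvd hd
  have hsum : (∑ i ∈ Finset.range f, (i : ℤ) * (α : ℤ) ^ i) ≡
      (∑ i ∈ Finset.range f, (i : ℤ)) [ZMOD (2:ℤ) ^ (m-1)] := by
    rw [Int.modEq_iff_dvd, ← Finset.sum_sub_distrib]
    refine Finset.dvd_sum fun i _ => ?_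
    have h3 : ((2:ℤ) ^ (m-1)) ∣ (1 - (α:ℤ) ^ i) := by have := (hαZ.pow i).symm.dvd; simp only [one_pow] at this; exact dvd_sub_comm.mp this
    have : (i:ℤ) - (i:ℤ) * (α:ℤ) ^ i = (i:ℤ) * (1 - (α:ℤ) ^ i) := by ring
    rw [this]
    exact h3.mul_left _
  -- f = 2^m * k + 1
  obtain ⟨k, hk⟩ : 2 ^ m ∣ f - 1 := (Nat.modEq_iff_dvd' hf0).mp hf.symm
  have hfk : f = 2 ^ m * k + 1 := by omega
  have hdiv : (2:ℕ) ^ (m-1) ∣ ∑ i ∈ Finset.range f, i := by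
    have h2 : (∑ i ∈ Finset.range f, i) * 2 = f * (f - 1) :=
      Finset.sum_range_id_mul_two f
    have hm2 : (2:ℕ) ^ m = 2 ^ (m-1) * 2 := by
      rw [← pow_succ]; congr 1; omega
    have : (∑ i ∈ Finset.range f, i) * 2 = (2 ^ (m-1) * ((2^m * k + 1) * k)) * 2 := by
      rw [h2, hk, hfk, hm2]
      ring
    refine ⟨(2^m * k + 1) * k, ?_⟩
    omega
  obtain ⟨c, hc⟩ := hdiv
  have hzsum : (∑ i ∈ Finset.range f, (i : ℤ)) = (2:ℤ) ^ (m-1) * c := by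
    have := congrArg (Nat.cast : ℕ → ℤ) hc
    push_cast at this ⊢
    exact this
  calc (∑ i ∈ Finset.range f, (i : ℤ) * (α : ℤ) ^ i)
      ≡ (∑ i ∈ Finset.range f, (i : ℤ)) [ZMOD (2:ℤ) ^ (m-1)] := hsum
    _ ≡ 0 [ZMOD (2:ℤ) ^ (m-1)] := Int.modEq_zero_iff_dvd.mpr ⟨c, hzsum⟩
end

section
/- Let ℓ ≡ −1 (mod 3), α = 1 + 3ℓ, and let ℓ' ≡ −1 (mod 3) with α' = 1 + 3ℓ'. Then there exists a positive integer f ≡ 1 (mod 3) such that α^f ≡ α' (mod 81). -/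
lemma aux_decide : ∀ a < 9, ∀ b < 9, ∃ f, f < 60 ∧ f % 3 = 1 ∧
    (9 * a + 7) ^ f % 81 = (9 * b + 7) % 81 := by decide

/-- Let `ℓ ≡ ℓ' ≡ −1 (mod 3)`, `α = 1 + 3ℓ`, `α' = 1 + 3ℓ'`. Then there is a
positive integer `f ≡ 1 (mod 3)` such that `α^f ≡ α' (mod 81)`. -/
theorem stmt_6 (ℓ ℓ' : ℤ) (hℓ : ℓ ≡ -1 [ZMOD 3]) (hℓ' : ℓ' ≡ -1 [ZMOD 3]) :
    ∃ f : ℕ, 0 < f ∧ f ≡ 1 [MOD 3] ∧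
      (1 + 3 * ℓ) ^ f ≡ 1 + 3 * ℓ' [ZMOD 81] := by
  obtain ⟨k, hk⟩ : ∃ k : ℤ, ℓ = 3 * k - 1 := by
    obtain ⟨k, hk⟩ := hℓ.dvd; exact ⟨-k, by linarith⟩
  obtain ⟨k', hk'⟩ : ∃ k : ℤ, ℓ' = 3 * k - 1 := by
    obtain ⟨k, hk⟩ := hℓ'.dvd; exact ⟨-k, by linarith⟩
  set r : ℕ := ((k - 1) % 9).toNat with hr
  set r' : ℕ := ((k' - 1) % 9).toNat with hr'
  have hrmod : ((k - 1) % 9 : ℤ) = (r : ℤ) := by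
    rw [hr, Int.toNat_of_nonneg (Int.emod_nonneg _ (by norm_num))]
  have hrmod' : ((k' - 1) % 9 : ℤ) = (r' : ℤ) := by
    rw [hr', Int.toNat_of_nonneg (Int.emod_nonneg _ (by norm_num))]
  have hrlt : r < 9 := by
    have := Int.emod_lt_of_pos (k - 1) (by norm_num : (0:ℤ) < 9)
    omega
  have hrlt' : r' < 9 := by
    have := Int.emod_lt_of_pos (k' - 1) (by norm_num : (0:ℤ) < 9)
    omega
  obtain ⟨f, hf60, hf3, hfpow⟩ := aux_decide r hrlt r' hrlt'
  refine ⟨f, by omega, by simpa [Nat.ModEq] using hf3, ?_⟩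
  have hA : (1 + 3 * ℓ) ≡ (9 * r + 7 : ℕ) [ZMOD 81] := by
    have h1 : (k - 1) ≡ (r : ℤ) [ZMOD 9] := by
      show (k - 1) % 9 = (r : ℤ) % 9; omega
    have h2 : (9 : ℤ) * (k - 1) ≡ 9 * (r : ℤ) [ZMOD 9 * 9] := h1.mul_left'
    have h3 : (1 + 3 * ℓ) = 9 * (k - 1) + 7 := by rw [hk]; ring
    rw [h3]
    push_cast
    have : (9 : ℤ) * 9 = 81 := by norm_num
    exact (this ▸ h2).add_right 7
  have hB : (1 + 3 * ℓ') ≡ (9 * r' + 7 : ℕ) [ZMOD 81] := by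
    have h1 : (k' - 1) ≡ (r' : ℤ) [ZMOD 9] := by
      show (k' - 1) % 9 = (r' : ℤ) % 9; omega
    have h2 : (9 : ℤ) * (k' - 1) ≡ 9 * (r' : ℤ) [ZMOD 9 * 9] := h1.mul_left'
    have h3 : (1 + 3 * ℓ') = 9 * (k' - 1) + 7 := by rw [hk']; ring
    rw [h3]
    push_cast
    have : (9 : ℤ) * 9 = 81 := by norm_num
    exact (this ▸ h2).add_right 7
  have hnat : ((9 * r + 7 : ℕ) : ℤ) ^ f ≡ ((9 * r' + 7 : ℕ) : ℤ) [ZMOD 81] := by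
    have h : (9 * r + 7) ^ f ≡ 9 * r' + 7 [MOD 81] := by
      unfold Nat.ModEq; omega
    exact_mod_cast Int.natCast_modEq_iff.mpr h
  exact (hA.pow f).trans (hnat.trans hB.symm)
end

section
/- Let m ≥ 3 and let α = 1 + 2^m·ℓ with ℓ odd. Then α has multiplicative order 2^{m−1} modulo 2^{2m−1}, and for any odd ℓ' there exists a positive odd integer t such that 1 + 2^m·ℓ' ≡ α^t (mod 2^{2m−1}). -/
lemma pow_one_add_modEq (N a : ℤ) (h : N ∣ a * a) : ∀ t : ℕ, (1 + a) ^ t ≡ 1 + (t : ℤ) * a [ZMOD N]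
  | 0 => by simp
  | t + 1 => by
    have ih := pow_one_add_modEq N a h t
    calc (1 + a) ^ (t + 1) = (1 + a) ^ t * (1 + a) := by ring
    _ ≡ (1 + (t : ℤ) * a) * (1 + a) [ZMOD N] := ih.mul_right _
    _ ≡ 1 + ((t + 1 : ℕ) : ℤ) * a [ZMOD N] := by
        refine (Int.modEq_iff_dvd.mpr ?_)
        have : (1 + ((t + 1 : ℕ) : ℤ) * a) - (1 + (t : ℤ) * a) * (1 + a) = (-(t : ℤ)) * (a * a) := by
          push_cast; ring
        rw [this]; exact h.mul_left _

/-- Let `m ≥ 3` and `α = 1 + 2^m·ℓ` with `ℓ` odd. Then `α` has multiplicative order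
`2^(m−1)` modulo `2^(2m−1)`, and for any odd `ℓ'` there is a positive odd integer `t`
with `1 + 2^m·ℓ' ≡ α^t (mod 2^(2m−1))`. -/
theorem stmt_10 (m : ℕ) (hm : 3 ≤ m) (ℓ : ℤ) (hℓ : Odd ℓ) :
    orderOf ((1 + (2 : ℤ) ^ m * ℓ : ℤ) : ZMod (2 ^ (2 * m - 1))) = 2 ^ (m - 1) ∧
      ∀ ℓ' : ℤ, Odd ℓ' →
        ∃ t : ℕ, 0 < t ∧ Odd t ∧
          (1 + (2 : ℤ) ^ m * ℓ') ≡ (1 + (2 : ℤ) ^ m * ℓ) ^ t [ZMOD (2 : ℤ) ^ (2 * m - 1)] := by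
  have hNcast : ((2 ^ (2 * m - 1) : ℕ) : ℤ) = (2 : ℤ) ^ (2 * m - 1) := by push_cast; ring
  set N : ℤ := (2 : ℤ) ^ (2 * m - 1) with hN
  set a : ℤ := (2 : ℤ) ^ m * ℓ with ha
  have hsq : N ∣ a * a := by
    have h1 : (2 : ℤ) ^ (2 * m - 1) ∣ (2 : ℤ) ^ m * (2 : ℤ) ^ m := by
      rw [← pow_add]; exact pow_dvd_pow 2 (by omega)
    exact h1.trans ⟨ℓ * ℓ, by rw [ha]; ring⟩
  have key : ∀ t : ℕ, (1 + a) ^ t ≡ 1 + (t : ℤ) * a [ZMOD N] := pow_one_add_modEq N a hsq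
  have hℓ2 : ¬ (2 : ℤ) ∣ ℓ := by
    have := Int.odd_iff.mp hℓ; omega
  constructor
  · -- order part
    haveI : Fact (Nat.Prime 2) := ⟨Nat.prime_two⟩
    have hm1 : m - 2 + 1 = m - 1 := by omega
    have hfin : ((1 + a : ℤ) : ZMod (2 ^ (2 * m - 1))) ^ 2 ^ (m - 2 + 1) = 1 := by
      rw [hm1]
      have h1 : ((1 + a) : ℤ) ^ 2 ^ (m - 1) ≡ 1 [ZMOD N] := by
        refine (key _).trans ?_
        have hd : N ∣ ((2 ^ (m - 1) : ℕ) : ℤ) * a := by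
          rw [ha, hN]; push_cast
          rw [← mul_assoc, ← pow_add]
          exact Dvd.dvd.mul_right (pow_dvd_pow 2 (by omega)) ℓ
        have : (1 : ℤ) - (1 + ((2 ^ (m - 1) : ℕ) : ℤ) * a) = -(((2 ^ (m - 1) : ℕ) : ℤ) * a) := by ring
        exact Int.modEq_iff_dvd.mpr (by rw [this]; exact hd.neg_right)
      have := (ZMod.intCast_eq_intCast_iff _ _ _).mpr (hNcast ▸ h1)
      push_cast at this ⊢
      convert this using 2
    have hnot : ((1 + a : ℤ) : ZMod (2 ^ (2 * m - 1))) ^ 2 ^ (m - 2) ≠ 1 := by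
      intro hcontra
      have h1 : ((1 + a) : ℤ) ^ 2 ^ (m - 2) ≡ 1 [ZMOD N] := by
        have : (((1 + a : ℤ) ^ 2 ^ (m - 2) : ℤ) : ZMod (2 ^ (2 * m - 1))) = ((1 : ℤ) : ZMod (2 ^ (2 * m - 1))) := by
          push_cast at hcontra ⊢
          exact hcontra
        have := (ZMod.intCast_eq_intCast_iff _ _ _).mp this
        rwa [hNcast] at this
      have h2 : ((1 + a) : ℤ) ^ 2 ^ (m - 2) ≡ 1 + ((2 ^ (m - 2) : ℕ) : ℤ) * a [ZMOD N] := key _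
      have h3 : N ∣ ((2 ^ (m - 2) : ℕ) : ℤ) * a := by
        have := (h1.symm.trans h2)
        have hd := Int.ModEq.dvd this
        simpa using hd
      rw [ha, hN] at h3
      push_cast at h3
      rw [← mul_assoc, ← pow_add] at h3
      have hlt : m - 2 + m < 2 * m - 1 := by omega
      have h4 : (2 : ℤ) ^ (2 * m - 1) = 2 ^ (m - 2 + m) * 2 ^ (2 * m - 1 - (m - 2 + m)) := by
        rw [← pow_add]; congr 1; omega
      rw [h4] at h3
      have h5 : (2 : ℤ) ^ (2 * m - 1 - (m - 2 + m)) ∣ ℓ := by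
        have hpos : (0 : ℤ) < 2 ^ (m - 2 + m) := by positivity
        exact (mul_dvd_mul_iff_left (ne_of_gt hpos)).mp h3
      have h6 : (2 : ℤ) ∣ ℓ := dvd_trans (dvd_pow_self 2 (by omega : 2 * m - 1 - (m - 2 + m) ≠ 0)) h5
      exact hℓ2 h6
    have := orderOf_eq_prime_pow (p := 2) (n := m - 2) hnot hfin
    rwa [hm1] at this
  · -- existence part
    intro ℓ' hℓ'
    -- find integer s with s * ℓ ≡ ℓ' [ZMOD 2^(m-1)]
    have hcop : IsCoprime ((2 : ℤ) ^ (m - 1)) ℓ := by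
      refine IsCoprime.pow_left ?_
      rw [Int.prime_two.coprime_iff_not_dvd]
      exact hℓ2
    obtain ⟨u, v, huv⟩ := hcop
    -- u * 2^(m-1) + v * ℓ = 1
    set s : ℤ := ℓ' * v with hs
    have hsℓ : (2 : ℤ) ^ (m - 1) ∣ s * ℓ - ℓ' := by
      refine ⟨-(ℓ' * u), ?_⟩
      rw [hs]
      linear_combination ℓ' * huv
    -- s is odd
    have hsodd : Odd s := by
      have h2 : (2 : ℤ) ∣ 2 ^ (m - 1) := dvd_pow_self 2 (by omega : m - 1 ≠ 0)
      obtain ⟨c, hc⟩ := h2.trans hsℓ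
      obtain ⟨k, hk⟩ := hℓ
      obtain ⟨k', hk'⟩ := hℓ'
      refine ⟨c + k' - s * k, ?_⟩
      have : s * (2 * k + 1) - (2 * k' + 1) = 2 * c := by rw [← hk, ← hk']; exact hc
      linarith
    set r : ℤ := s % 2 ^ (m - 1) with hr
    have hpow_pos : (0 : ℤ) < 2 ^ (m - 1) := by positivity
    have hr_nonneg : 0 ≤ r := Int.emod_nonneg s (ne_of_gt hpow_pos)
    have hrs : (2 : ℤ) ^ (m - 1) ∣ s - r :=
      ⟨s / 2 ^ (m - 1), by linarith [Int.mul_ediv_add_emod s (2 ^ (m - 1))]⟩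
    have hrodd : Odd r := by
      have h2 : (2 : ℤ) ∣ 2 ^ (m - 1) := dvd_pow_self 2 (by omega : m - 1 ≠ 0)
      obtain ⟨c, hc⟩ := h2.trans hrs
      obtain ⟨k, hk⟩ := hsodd
      exact ⟨k - c, by omega⟩
    have hr_pos : 0 < r := by
      rcases hrodd with ⟨k, hk⟩; omega
    refine ⟨r.toNat, by omega, ?_, ?_⟩
    · rcases hrodd with ⟨k, hk⟩
      exact ⟨k.toNat, by omega⟩
    · have hcast : ((r.toNat : ℕ) : ℤ) = r := Int.toNat_of_nonneg hr_nonneg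
      have h1 : (1 + a) ^ r.toNat ≡ 1 + r * a [ZMOD N] := by
        have := key r.toNat
        rwa [hcast] at this
      refine Int.ModEq.symm (h1.trans ?_)
      -- show 1 + r * a ≡ 1 + 2^m * ℓ' [ZMOD N]
      refine Int.modEq_iff_dvd.mpr ?_
      have heq : (1 + (2:ℤ) ^ m * ℓ') - (1 + r * a) = 2 ^ m * (ℓ' - r * ℓ) := by
        rw [ha]; ring
      rw [heq, hN]
      have hdvd : (2 : ℤ) ^ (m - 1) ∣ ℓ' - r * ℓ := by
        have h1 : (2 : ℤ) ^ (m - 1) ∣ (s - r) * ℓ := hrs.mul_right ℓ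
        have : ℓ' - r * ℓ = -(s * ℓ - ℓ') + (s - r) * ℓ := by ring
        rw [this]
        exact dvd_add hsℓ.neg_right h1
      have hsplit : (2 : ℤ) ^ (2 * m - 1) = 2 ^ m * 2 ^ (m - 1) := by
        rw [← pow_add]; congr 1; omega
      rw [hsplit]
      exact mul_dvd_mul_left _ hdvd
end

section
/- Let m ≥ 3, s = 2^{m−1}, r = s/2, and let ℓ, ℓ' be odd integers with ℓ ≡ ℓ' (mod r) but ℓ ≢ ℓ' (mod s); write ℓ' = ℓ + qr with q odd. Suppose integers i, j satisfy i ≡ 1 (mod 2s), ℓj ≡ ℓ' (mod s), and 2sℓ·j(j−1)/2 + s² ≡ −ℓ'·s²/2 (mod 2s²). Then j = 1 + rk with k ≡ 1 (mod 4). -/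
/-- Let `m ≥ 3`, `s = 2^(m−1)`, `r = 2^(m−2)`, `ℓ, ℓ'` odd with `ℓ ≡ ℓ' (mod r)`,
`ℓ ≢ ℓ' (mod s)`, `ℓ' = ℓ + qr` with `q` odd. If integers `i, j` satisfy
`i ≡ 1 (mod 2s)`, `ℓj ≡ ℓ' (mod s)`, and
`2sℓ·j(j−1)/2 + s² ≡ −ℓ'·s²/2 (mod 2s²)`, then `j = 1 + rk` with `k ≡ 1 (mod 4)`. -/
theorem stmt_16 (m : ℕ) (hm : 3 ≤ m) (ℓ ℓ' q : ℤ) (hℓ : Odd ℓ) (hℓ'odd : Odd ℓ')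
    (hq : Odd q) (hℓ' : ℓ' = ℓ + q * 2 ^ (m - 2))
    (hmodr : ℓ ≡ ℓ' [ZMOD (2 : ℤ) ^ (m - 2)])
    (hmods : ¬ ℓ ≡ ℓ' [ZMOD (2 : ℤ) ^ (m - 1)])
    (i j : ℤ)
    (hi : i ≡ 1 [ZMOD 2 * (2 : ℤ) ^ (m - 1)])
    (hj1 : ℓ * j ≡ ℓ' [ZMOD (2 : ℤ) ^ (m - 1)])
    (hj2 : 2 * (2 : ℤ) ^ (m - 1) * ℓ * (j * (j - 1) / 2) + ((2 : ℤ) ^ (m - 1)) ^ 2 ≡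
      -ℓ' * (((2 : ℤ) ^ (m - 1)) ^ 2 / 2) [ZMOD 2 * ((2 : ℤ) ^ (m - 1)) ^ 2]) :
    ∃ k : ℤ, j = 1 + 2 ^ (m - 2) * k ∧ k ≡ 1 [ZMOD 4] := by
  subst hℓ'
  obtain ⟨n, rfl⟩ : ∃ n, m = n + 3 := ⟨m - 3, by omega⟩
  have h2 : n + 3 - 2 = n + 1 := rfl
  have h1 : n + 3 - 1 = n + 2 := rfl
  rw [h1] at hj1 hj2
  rw [h2] at hj1 hj2 ⊢
  set R : ℤ := 2 ^ n with hR
  have hRpos : 0 < R := pow_pos (by norm_num) n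
  have e1 : (2:ℤ)^(n+1) = 2 * R := by rw [hR]; ring
  have e2 : (2:ℤ)^(n+2) = 4 * R := by rw [hR]; ring
  obtain ⟨b, hb⟩ := hℓ
  obtain ⟨c', hc'⟩ := hq
  -- Step 1: extract divisibility from hj1
  have d1 : (4*R) ∣ (ℓ + q * 2 ^ (n + 1)) - ℓ * j := by rw [← e2]; exact hj1.dvd
  obtain ⟨c, hc⟩ := d1
  rw [e1] at hc
  have hco2 : IsCoprime (2:ℤ) ℓ := ⟨-b, 1, by omega⟩
  have hco : IsCoprime (2*R : ℤ) ℓ := by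
    rw [← e1]; exact (hco2.pow_left : IsCoprime ((2:ℤ)^(n+1)) ℓ)
  have d2 : (2*R : ℤ) ∣ ℓ * (j - 1) := ⟨q - 2*c, by linear_combination -hc⟩
  obtain ⟨k, hk⟩ := hco.dvd_of_dvd_mul_left d2
  -- hk : j - 1 = 2*R*k
  have key : (2*R) * (ℓ*k) = (2*R) * (q - 2*c) := by linear_combination -ℓ * hk - hc
  have key' : ℓ * k = q - 2*c := mul_left_cancel₀ (by positivity) key
  -- k is odd
  obtain ⟨a, ha⟩ : Odd k := by
    refine ⟨c' - c - b*k, ?_⟩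
    linear_combination key' - k * hb + hc'
  -- Step 2
  have hT : j*(j-1)/2 = R*k*(1 + 2*R*k) := by
    have hj : j = 1 + 2*R*k := by linarith
    have : j*(j-1) = 2*(R*k*(1+2*R*k)) := by rw [hj]; ring
    rw [this, Int.mul_ediv_cancel_left _ two_ne_zero]
  have hsq : ((2:ℤ)^(n+2))^2 = 2*(8*R^2) := by rw [hR]; ring
  have hS : ((2:ℤ)^(n+2))^2/2 = 8*R^2 := by rw [hsq, Int.mul_ediv_cancel_left _ two_ne_zero]
  have d3 := hj2.dvd
  rw [hT, hS, hsq, e2] at d3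
  obtain ⟨d, hd⟩ := d3
  have key2 : (8*R^2) * ((ℓ + q*(2*R)) + ℓ*k + 2*R*(ℓ*k^2) + 2) = (8*R^2) * (-4*d) := by
    linear_combination -hd - 8*q*R^2*e1
  have hX := mul_left_cancel₀ (show (8*R^2:ℤ) ≠ 0 by positivity) key2
  -- ℓ*k^2 + q is even
  obtain ⟨w, hw⟩ : ∃ w, ℓ*k^2 + q = 2*w :=
    ⟨4*a^2*b + 4*a*b + b + 2*a^2 + 2*a + c' + 1, by rw [hb, ha, hc']; ring⟩
  -- 4 ∣ ℓ*(1+k) + 2, deduce a even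
  have ha2 : 2*a = 2*(-2*d - 2*R*w - 2*a*b - 2*b - 2) := by
    linear_combination hX - 2*R*hw - (1+k)*hb - (2*b+1)*ha
  have ha3 : a = -2*d - 2*R*w - 2*a*b - 2*b - 2 := by linarith
  refine ⟨k, by rw [e1]; linarith, ?_⟩
  exact Int.modEq_iff_dvd.mpr ⟨d + R*w + a*b + b + 1, by linear_combination -2*ha3 - ha⟩
end

section
/- Let m ≥ 3, s = 2^{m−1}, r = s/2, r̄ = r/2, u = s². There exist no integers i, j, a, b, ℓ'₁ and no odd integer ℓ such that both congruences hold: (1) u(1−ℓ) + 4uℓ(i+2a+b+2) + 2uℓ'₁ + ur(ℓ+1) + us(ℓ+ℓ'₁) + usr + 2us(a+b+ℓ'₁) ≡ 0 (mod 4us), and (2) −u(ℓ+1) − 2uℓ'₁ − 4uℓ(i+2j+b+1) − ur(ℓ−1) + us(r̄−ℓ+ℓ'₁+1) + usr(r̄+1) + u·φ(2sℓ') + 2us(a+b+ℓ'₁+1) ≡ 0 (mod 4us), where ℓ' = ℓ − r − sℓ'₁ and φ(n) = n(n−1)(n−2)/6. -/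
/-- Let `m ≥ 3`, `s = 2^(m−1)`, `r = 2^(m−2)`, `r̄ = 2^(m−3)`, `u = s²`, and
`φ(n) = n(n−1)(n−2)/6`. There are no integers `i, j, a, b, ℓ'₁` and odd integer `ℓ`
satisfying both congruences (1) and (2) of Theorem 7.1, where `ℓ' = ℓ − r − sℓ'₁`. -/
theorem stmt_17 (m : ℕ) (hm : 3 ≤ m) (s r rb u : ℤ)
    (hs : s = 2 ^ (m - 1)) (hr : r = 2 ^ (m - 2)) (hrb : rb = 2 ^ (m - 3))
    (hu : u = s ^ 2) :
    ¬ ∃ (i j a b ℓ₁ ℓ : ℤ), Odd ℓ ∧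
      (u * (1 - ℓ) + 4 * u * ℓ * (i + 2 * a + b + 2) + 2 * u * ℓ₁ + u * r * (ℓ + 1) +
          u * s * (ℓ + ℓ₁) + u * s * r + 2 * u * s * (a + b + ℓ₁) ≡ 0
          [ZMOD 4 * u * s]) ∧
      (-(u * (ℓ + 1)) - 2 * u * ℓ₁ - 4 * u * ℓ * (i + 2 * j + b + 1) - u * r * (ℓ - 1) +
          u * s * (rb - ℓ + ℓ₁ + 1) + u * s * r * (rb + 1) +
          u * ((2 * s * (ℓ - r - s * ℓ₁)) * (2 * s * (ℓ - r - s * ℓ₁) - 1) *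
            (2 * s * (ℓ - r - s * ℓ₁) - 2) / 6) +
          2 * u * s * (a + b + ℓ₁ + 1) ≡ 0 [ZMOD 4 * u * s]) := by
  rintro ⟨i, j, a, b, ℓ₁, ℓ, hodd, h1, h2⟩
  obtain ⟨e, rfl⟩ : ∃ e, m = e + 3 := ⟨m - 3, by omega⟩
  set t : ℤ := 2 ^ e with htdef
  have ht : (0:ℤ) < t := by positivity
  have hs' : s = 4 * t := by
    rw [hs, show e + 3 - 1 = e + 2 by omega, pow_add]; ring
  subst hs'
  have hr' : r = 2 * t := by
    rw [hr, show e + 3 - 2 = e + 1 by omega, pow_add]; ring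
  subst hr'
  have hrb' : rb = t := by rw [hrb, show e + 3 - 3 = e by omega]
  subst hrb'
  have hu' : u = 16 * t ^ 2 := by rw [hu]; ring
  subst hu'
  have d1 := Int.modEq_zero_iff_dvd.mp h1
  have d2 := Int.modEq_zero_iff_dvd.mp h2
  clear h1 h2 hs hr hrb hu hm
  -- abbreviations for the cubic product
  set D : ℤ := 2 * (4 * t) * (ℓ - 2 * t - 4 * t * ℓ₁) with hD
  -- the product of three consecutive integers is divisible by 48 here
  have h16 : (16 : ℤ) ∣ D * (D - 1) * (D - 2) :=
    ⟨t * (ℓ - 2 * t - 4 * t * ℓ₁) * (D - 1) * (4 * t * (ℓ - 2 * t - 4 * t * ℓ₁) - 1),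
      by rw [hD]; ring⟩
  have h3 : (3 : ℤ) ∣ D * (D - 1) * (D - 2) := by
    have : (3:ℤ) ∣ D ∨ (3:ℤ) ∣ D - 1 ∨ (3:ℤ) ∣ D - 2 := by omega
    rcases this with h | h | h
    · exact (h.mul_right _).mul_right _
    · exact (h.mul_left _).mul_right _
    · exact h.mul_left _
  have h48 : (48 : ℤ) ∣ D * (D - 1) * (D - 2) := by
    have hco : IsCoprime (16 : ℤ) 3 := by
      rw [Int.isCoprime_iff_gcd_eq_one]; norm_num
    have := hco.mul_dvd h16 h3
    norm_num at this
    exact this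
  have h6 : (6 : ℤ) ∣ D * (D - 1) * (D - 2) := dvd_trans (by norm_num) h48
  have h8 : (8 : ℤ) ∣ D * (D - 1) * (D - 2) / 6 := by
    obtain ⟨c, hc⟩ := h48
    refine ⟨c, ?_⟩
    rw [hc]
    omega
  obtain ⟨ψ, hψ⟩ := h8
  rw [hψ] at d2
  -- the sum of the two congruences
  have dsum : 4 * (16 * t ^ 2) * (4 * t) ∣
      (16 * t ^ 2 * (1 - ℓ) + 4 * (16 * t ^ 2) * ℓ * (i + 2 * a + b + 2) +
          2 * (16 * t ^ 2) * ℓ₁ + 16 * t ^ 2 * (2 * t) * (ℓ + 1) +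
          16 * t ^ 2 * (4 * t) * (ℓ + ℓ₁) + 16 * t ^ 2 * (4 * t) * (2 * t) +
          2 * (16 * t ^ 2) * (4 * t) * (a + b + ℓ₁)) +
      (-(16 * t ^ 2 * (ℓ + 1)) - 2 * (16 * t ^ 2) * ℓ₁ -
          4 * (16 * t ^ 2) * ℓ * (i + 2 * j + b + 1) - 16 * t ^ 2 * (2 * t) * (ℓ - 1) +
          16 * t ^ 2 * (4 * t) * (t - ℓ + ℓ₁ + 1) + 16 * t ^ 2 * (4 * t) * (2 * t) * (t + 1) +
          16 * t ^ 2 * (8 * ψ) + 2 * (16 * t ^ 2) * (4 * t) * (a + b + ℓ₁ + 1)) :=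
    dvd_add d1 d2
  have d64 : (64 * t ^ 2 : ℤ) ∣ 32 * t ^ 2 * ℓ := by
    have hA : (64 * t ^ 2 : ℤ) ∣ _ := dvd_trans ⟨4 * t, by ring⟩ dsum
    have hB : (64 * t ^ 2 : ℤ) ∣
        (16 * t ^ 2 * (1 - ℓ) + 4 * (16 * t ^ 2) * ℓ * (i + 2 * a + b + 2) +
          2 * (16 * t ^ 2) * ℓ₁ + 16 * t ^ 2 * (2 * t) * (ℓ + 1) +
          16 * t ^ 2 * (4 * t) * (ℓ + ℓ₁) + 16 * t ^ 2 * (4 * t) * (2 * t) +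
          2 * (16 * t ^ 2) * (4 * t) * (a + b + ℓ₁)) +
        (-(16 * t ^ 2 * (ℓ + 1)) - 2 * (16 * t ^ 2) * ℓ₁ -
          4 * (16 * t ^ 2) * ℓ * (i + 2 * j + b + 1) - 16 * t ^ 2 * (2 * t) * (ℓ - 1) +
          16 * t ^ 2 * (4 * t) * (t - ℓ + ℓ₁ + 1) + 16 * t ^ 2 * (4 * t) * (2 * t) * (t + 1) +
          16 * t ^ 2 * (8 * ψ) + 2 * (16 * t ^ 2) * (4 * t) * (a + b + ℓ₁ + 1)) +
        32 * t ^ 2 * ℓ :=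
      ⟨ℓ * (2 * a - 2 * j + 1) + t + t * (ℓ + ℓ₁) + 2 * t ^ 2 + t * (t - ℓ + ℓ₁ + 1) +
        2 * t ^ 2 * (t + 1) + 2 * ψ + 2 * t * (2 * a + 2 * b + 2 * ℓ₁ + 1), by ring⟩
    have := dvd_sub hB hA
    simpa using this
  obtain ⟨c, hc⟩ := d64
  have hℓ : ℓ = 2 * c := by
    have h32 : (32 * t ^ 2 : ℤ) ≠ 0 := by positivity
    apply mul_left_cancel₀ h32
    linarith [hc]
  obtain ⟨n, hn⟩ := hodd
  omega
end

section
/- Let p be an odd prime, m ≥ 1, and let α, i, j be positive integers with α ≡ 1 (mod p^m). Then α^j·(α^{ij} − 1)/(α^j − 1) ≡ i + (α−1)·i·j·(i+1)/2 (mod p^{2m}), where the left-hand side equals the geometric sum α^j + α^{2j} + ⋯ + α^{ij}. -/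
/-!
Write `α = 1 + d` with `p ^ m ∣ d`. Since `d ^ 2 ≡ 0 (mod p ^ (2m))`, the binomial expansion
truncates to `α ^ k ≡ 1 + k d`, so the geometric sum is `i + d · j · (1 + 2 + ⋯ + i)` modulo
`p ^ (2m)`, and Gauss' formula gives the claim.
-/

open Finset

theorem Int.pow_modEq_one_add_mul_sub_one {a n : ℤ} (h : a ≡ 1 [ZMOD n]) (k : ℕ) :
    a ^ k ≡ 1 + k * (a - 1) [ZMOD n ^ 2] := by
  have hsq : n ^ 2 ∣ (a - 1) ^ 2 := pow_dvd_pow_of_dvd h.symm.dvd 2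
  have htrunc := sq_dvd_add_pow_sub_sub (a - 1) 1 k
  simp only [one_pow, one_mul, add_sub_cancel] at htrunc
  refine (Int.modEq_iff_dvd.mpr ?_).symm
  rw [show a ^ k - (1 + k * (a - 1)) = a ^ k - (a - 1) * k - 1 by ring]
  exact hsq.trans htrunc

theorem Int.sum_range_succ_mul_two (i : ℕ) :
    (∑ t ∈ Finset.range i, ((t : ℤ) + 1)) * 2 = i * (i + 1) := by
  induction i with
  | zero => simp
  | succ i ih => rw [sum_range_succ, add_mul, ih]; push_cast; ring

theorem Int.sum_range_pow_mul_succ_modEq {a n : ℤ} (h : a ≡ 1 [ZMOD n]) (i j : ℕ) :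
    ∑ t ∈ Finset.range i, a ^ (j * (t + 1)) ≡
      i + (a - 1) * (i * j * (i + 1) / 2) [ZMOD n ^ 2] := by
  have hgauss : (i : ℤ) * j * (i + 1) / 2 = j * ∑ t ∈ Finset.range i, ((t : ℤ) + 1) := by
    rw [mul_right_comm, ← Int.sum_range_succ_mul_two, mul_comm, ← mul_assoc,
      Int.mul_ediv_cancel _ two_ne_zero]
  calc ∑ t ∈ Finset.range i, a ^ (j * (t + 1))
      ≡ ∑ t ∈ Finset.range i, (1 + (j * (t + 1) : ℕ) * (a - 1)) [ZMOD n ^ 2] :=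
        Int.ModEq.sum fun t _ => Int.pow_modEq_one_add_mul_sub_one h _
    _ = i + (a - 1) * (i * j * (i + 1) / 2) := by
        rw [hgauss, sum_add_distrib, mul_sum, mul_sum]
        simp only [sum_const, Finset.card_range, nsmul_eq_mul, mul_one]
        congr 1
        refine sum_congr rfl fun t _ => ?_
        push_cast
        ring

theorem stmt_18_general (p m : ℕ)
    (α i j : ℕ)
    (hα : α ≡ 1 [MOD p ^ m]) :
    (∑ t ∈ Finset.range i, (α : ℤ) ^ (j * (t + 1))) ≡
      (i : ℤ) + ((α : ℤ) - 1) * ((i : ℤ) * (j : ℤ) * ((i : ℤ) + 1) / 2)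
      [ZMOD (p : ℤ) ^ (2 * m)] := by
  have hαZ : (α : ℤ) ≡ 1 [ZMOD (p : ℤ) ^ m] := by exact_mod_cast Int.natCast_modEq_iff.mpr hα
  rw [mul_comm, pow_mul]
  exact Int.sum_range_pow_mul_succ_modEq hαZ i j

/-- Let `p` be an odd prime, `m ≥ 1`, `α > 1` with `α ≡ 1 (mod p^m)`, and `i, j ≥ 1`.
Then `α^j + α^(2j) + ⋯ + α^(ij) ≡ i + (α−1)·i·j·(i+1)/2 (mod p^(2m))`. -/
theorem stmt_18 (p m : ℕ) (hp : p.Prime) (hodd : Odd p) (hm : 1 ≤ m)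
    (α i j : ℕ) (hα1 : 1 < α) (hi : 1 ≤ i) (hj : 1 ≤ j)
    (hα : α ≡ 1 [MOD p ^ m]) :
    (∑ t ∈ Finset.range i, (α : ℤ) ^ (j * (t + 1))) ≡
      (i : ℤ) + ((α : ℤ) - 1) * ((i : ℤ) * (j : ℤ) * ((i : ℤ) + 1) / 2)
      [ZMOD (p : ℤ) ^ (2 * m)] :=
  stmt_18_general p m α i j hα
end
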